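/- arXiv:1001.0767 — 4 statements merged into one kernel-verified Lean document; each statement's English description precedes it below -/
import Mathlib

section
/- Let f : {0,1}ⁿ → {0,1} with n ≥ 1. If f is constant, then the amplitude of |0ⁿ⟩ in H^{⊗n}(2^{-n/2} Σ_x (−1)^{f(x)}|x⟩) has absolute value 1; if f is balanced (|f⁻¹(0)| = |f⁻¹(1)| = 2^{n−1}), then that amplitude is 0. -/
/-! The Hadamard amplitude of `|0ⁿ⟩` pairs every basis state with the sign `+1`, so after the
two normalisations `2^{-n/2}` it is the average `2^{-n} Σ_x (-1)^{f x}`. The sign sum is the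
number of zeros of `f` minus the number of ones: `±2ⁿ` when `f` is constant, `0` when `f` is
balanced. -/

open Finset

lemma ZMod.two_eq_zero_or_one (a : ZMod 2) : a = 0 ∨ a = 1 := by
  revert a; decide

lemma neg_one_pow_val_eq_ite_sub_ite {R : Type*} [Ring R] (a : ZMod 2) :
    (-1 : R) ^ a.val = (if a = 0 then 1 else 0) - (if a = 1 then 1 else 0) := by
  rcases a.two_eq_zero_or_one with rfl | rfl <;> simp [ZMod.val_one]

lemma sum_neg_one_pow_val {α R : Type*} [Fintype α] [Ring R] (f : α → ZMod 2) :
    ∑ x, (-1 : R) ^ (f x).val = #{x | f x = 0} - #{x | f x = 1} := by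
  simp only [neg_one_pow_val_eq_ite_sub_ite, sum_sub_distrib, sum_boole]

lemma sum_neg_one_pow_val_of_forall_eq {α R : Type*} [Fintype α] [Ring R] {f : α → ZMod 2}
    {c : ZMod 2} (hf : ∀ x, f x = c) :
    ∑ x, (-1 : R) ^ (f x).val = Fintype.card α * (-1) ^ c.val := by
  simp [hf]

lemma inv_sqrt_two_pow_mul_self (n : ℕ) :
    ((Real.sqrt 2 : ℂ) ^ n)⁻¹ * ((Real.sqrt 2 : ℂ) ^ n)⁻¹ = ((2 : ℂ) ^ n)⁻¹ := by
  have hsq : (Real.sqrt 2 : ℂ) ^ 2 = 2 := by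
    exact_mod_cast Real.sq_sqrt zero_le_two
  rw [← mul_inv, ← mul_pow, ← sq, hsq]

theorem stmt_3_general (n : ℕ) (f : (Fin n → ZMod 2) → ZMod 2)
    (amp : ℂ)
    (hamp : amp = ((Real.sqrt 2 : ℂ) ^ n)⁻¹ * ∑ x : Fin n → ZMod 2,
      (-1 : ℂ) ^ (∑ i, x i * (fun _ : Fin n => (0 : ZMod 2)) i).val *
        (((Real.sqrt 2 : ℂ) ^ n)⁻¹ * (-1 : ℂ) ^ (f x).val)) :
    ((∀ x y, f x = f y) → ‖amp‖ = 1) ∧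
    (((Finset.univ.filter fun x => f x = 0).card = 2 ^ (n - 1) ∧
        (Finset.univ.filter fun x => f x = 1).card = 2 ^ (n - 1)) → amp = 0) := by
  have hamp_avg : amp = ((2 : ℂ) ^ n)⁻¹ * ∑ x, (-1 : ℂ) ^ (f x).val := by
    simp only [hamp, mul_zero, sum_const_zero, ZMod.val_zero, pow_zero, one_mul]
    rw [← mul_sum, ← mul_assoc, inv_sqrt_two_pow_mul_self]
  refine ⟨fun hconst => ?_, fun ⟨hzeros, hones⟩ => ?_⟩
  · rw [hamp_avg, sum_neg_one_pow_val_of_forall_eq (fun x => hconst x 0)]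
    simp
  · rw [hamp_avg, sum_neg_one_pow_val, hzeros, hones, sub_self, mul_zero]

/-- Deutsch–Jozsa correctness: the amplitude of `|0ⁿ⟩` in
`H^{⊗n}(2^{-n/2} Σ_x (−1)^{f(x)}|x⟩)` has absolute value 1 if `f` is constant,
and is 0 if `f` is balanced. -/
theorem stmt_3 (n : ℕ) (hn : 1 ≤ n) (f : (Fin n → ZMod 2) → ZMod 2)
    (amp : ℂ)
    (hamp : amp = ((Real.sqrt 2 : ℂ) ^ n)⁻¹ * ∑ x : Fin n → ZMod 2,
      (-1 : ℂ) ^ (∑ i, x i * (fun _ : Fin n => (0 : ZMod 2)) i).val *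
        (((Real.sqrt 2 : ℂ) ^ n)⁻¹ * (-1 : ℂ) ^ (f x).val)) :
    ((∀ x y, f x = f y) → ‖amp‖ = 1) ∧
    (((Finset.univ.filter fun x => f x = 0).card = 2 ^ (n - 1) ∧
        (Finset.univ.filter fun x => f x = 1).card = 2 ^ (n - 1)) → amp = 0) :=
  stmt_3_general n f amp hamp
end

section
/- Let 0 ≤ θ ≤ π/2 and suppose A|0…0⟩ = sin(θ)|ψ₁⟩ + cos(θ)|ψ₀⟩ with |ψ₀⟩,|ψ₁⟩ orthonormal. Let Q act on span{|ψ₀⟩,|ψ₁⟩} as the composition of the reflection sending |ψ₁⟩ ↦ −|ψ₁⟩, |ψ₀⟩ ↦ |ψ₀⟩ followed by the rotation-reflection −(I − 2|η⟩⟨η|) where |η⟩ = A|0…0⟩. Then for every natural number k, Q^k A|0…0⟩ = sin((2k+1)θ)|ψ₁⟩ + cos((2k+1)θ)|ψ₀⟩. -/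
/-! The reflection `I − 2|η⟩⟨η|` about the unit vector `η = (cos θ, sin θ)`, negated and composed
with the reflection `diag(1, −1)`, is the rotation by `2θ`; hence `Q^k` is the rotation by `2kθ`,
and it carries `η`, at angle `θ`, to the unit vector at angle `(2k + 1)θ`. -/

open Real Matrix

noncomputable def rotationMatrix (α : ℝ) : Matrix (Fin 2) (Fin 2) ℝ :=
  !![cos α, -sin α; sin α, cos α]

theorem rotationMatrix_zero : rotationMatrix 0 = 1 := by
  ext i j
  fin_cases i <;> fin_cases j <;> simp [rotationMatrix]

theorem rotationMatrix_mul (α β : ℝ) :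
    rotationMatrix α * rotationMatrix β = rotationMatrix (α + β) := by
  ext i j
  fin_cases i <;> fin_cases j <;>
    simp [rotationMatrix, Matrix.mul_apply, Fin.sum_univ_two, cos_add, sin_add] <;> ring

theorem rotationMatrix_pow (α : ℝ) (k : ℕ) : rotationMatrix α ^ k = rotationMatrix (k * α) := by
  induction k with
  | zero => simp [rotationMatrix_zero]
  | succ k ih => rw [pow_succ, ih, rotationMatrix_mul]; push_cast; ring_nf

theorem rotationMatrix_mulVec_angle (α β : ℝ) :
    rotationMatrix α *ᵥ ![cos β, sin β] = ![cos (α + β), sin (α + β)] := by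
  ext i
  fin_cases i <;> simp [rotationMatrix, Matrix.mulVec, dotProduct, cos_add, sin_add]; ring

theorem neg_householder_mul_diag_eq_rotationMatrix (θ : ℝ) :
    -(1 - 2 • vecMulVec ![cos θ, sin θ] ![cos θ, sin θ]) * !![1, 0; 0, -1]
      = rotationMatrix (2 * θ) := by
  ext i j
  fin_cases i <;> fin_cases j <;>
    simp [rotationMatrix, vecMulVec, Matrix.mul_apply, Fin.sum_univ_two, Matrix.one_apply,
      cos_two_mul, sin_two_mul] <;>
    nlinarith [sin_sq_add_cos_sq θ]

theorem stmt_6_general (θ : ℝ)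
    (η : Fin 2 → ℝ) (hη : η = ![Real.cos θ, Real.sin θ])
    (Uf Q : Matrix (Fin 2) (Fin 2) ℝ)
    (hUf : Uf = !![1, 0; 0, -1])
    (hQ : Q = -((1 : Matrix (Fin 2) (Fin 2) ℝ) - 2 • Matrix.vecMulVec η η) * Uf) :
    ∀ k : ℕ, (Q ^ k).mulVec η =
      ![Real.cos ((2 * k + 1) * θ), Real.sin ((2 * k + 1) * θ)] := by
  intro k
  subst hη hUf hQ
  rw [neg_householder_mul_diag_eq_rotationMatrix, rotationMatrix_pow,
    rotationMatrix_mulVec_angle]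
  ring_nf

/-- amplitude amplification: in the 2-dimensional invariant subspace,
identified with `ℝ²` via the orthonormal basis `(|ψ₀⟩, |ψ₁⟩)`, the Grover iterate
`Q = −(I − 2|η⟩⟨η|) ∘ U_f` (with `η = A|0…0⟩ = (cos θ, sin θ)` and `U_f = diag(1,−1)`)
satisfies `Q^k A|0…0⟩ = sin((2k+1)θ)|ψ₁⟩ + cos((2k+1)θ)|ψ₀⟩` for every `k`. -/
theorem stmt_6 (θ : ℝ) (hθ0 : 0 ≤ θ) (hθ : θ ≤ Real.pi / 2)
    (η : Fin 2 → ℝ) (hη : η = ![Real.cos θ, Real.sin θ])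
    (Uf Q : Matrix (Fin 2) (Fin 2) ℝ)
    (hUf : Uf = !![1, 0; 0, -1])
    (hQ : Q = -((1 : Matrix (Fin 2) (Fin 2) ℝ) - 2 • Matrix.vecMulVec η η) * Uf) :
    ∀ k : ℕ, (Q ^ k).mulVec η =
      ![Real.cos ((2 * k + 1) * θ), Real.sin ((2 * k + 1) * θ)] :=
  stmt_6_general θ η hη Uf Q hUf hQ
end

section
/- In the continuous-time quantum walk search on the complete graph with Hamiltonian H = |V⟩⟨V| + |M⟩⟨M|, starting from the uniform state |V⟩ with α = ⟨M|V⟩ = √(m/n), the probability of measuring a marked vertex at time t equals α² cos²(αt) + sin²(αt); in particular at time t = π/(2α) = (π/2)√(n/m) this probability is 1. -/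
open scoped ComplexInnerProductSpace

/-!
Since `⟨V|V⟩ = ⟨M|M⟩ = 1` and `⟨V|M⟩ = α`, the shifted Hamiltonian `H - 1` swaps `|V⟩` and `|M⟩`
up to the factor `α`, so `|V⟩ ± |M⟩` are eigenvectors with eigenvalues `±α` and
`e^{-i(H-1)t}|V⟩ = cos(αt)|V⟩ - i sin(αt)|M⟩`. Its amplitude at a marked vertex is
`cos(αt)/√n - i sin(αt)/√m`; summing the squared moduli over the `m` marked vertices gives
`α² cos²(αt) + sin²(αt)`, which is `1` at `αt = π/2`.
-/

section Exponential

variable {E : Type*} [NormedAddCommGroup E] [NormedSpace ℂ E] [CompleteSpace E]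

theorem ContinuousLinearMap.exp_apply_of_apply_eq_smul (A : E →L[ℂ] E) {x : E} {c : ℂ}
    (h : A x = c • x) : NormedSpace.exp A x = Complex.exp c • x := by
  have hpow (n : ℕ) : (A ^ n) x = c ^ n • x := by
    induction n with
    | zero => simp
    | succ n ih =>
      rw [pow_succ', mul_apply_eq_comp, ih, map_smul, h, smul_smul, pow_succ]
  have hsum := (ContinuousLinearMap.apply ℂ E x).map_tsum
    (NormedSpace.expSeries_summable' (𝕂 := ℂ) A)
  simp only [ContinuousLinearMap.apply_apply, smul_apply, hpow, smul_smul] at hsum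
  rw [NormedSpace.exp_eq_tsum ℂ, hsum, Summable.tsum_smul_const, Complex.exp_eq_exp_ℂ,
    NormedSpace.exp_eq_tsum ℂ]
  · simp only [smul_eq_mul]
  · exact NormedSpace.expSeries_summable' (𝕂 := ℂ) c

theorem ContinuousLinearMap.exp_apply_of_swap (B : E →L[ℂ] E) {u w : E} {a : ℂ}
    (hu : B u = a • w) (hw : B w = a • u) :
    NormedSpace.exp B u = Complex.cosh a • u + Complex.sinh a • w := by
  have hplus : NormedSpace.exp B (u + w) = Complex.exp a • (u + w) :=
    B.exp_apply_of_apply_eq_smul (by rw [map_add, hu, hw, smul_add, add_comm])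
  have hminus : NormedSpace.exp B (u - w) = Complex.exp (-a) • (u - w) :=
    B.exp_apply_of_apply_eq_smul (by rw [map_sub, hu, hw]; match_scalars <;> ring)
  have hsplit : u = (2⁻¹ : ℂ) • ((u + w) + (u - w)) := by match_scalars <;> ring
  rw [hsplit, map_smul, map_add, hplus, hminus, ← Complex.cosh_add_sinh, ← Complex.cosh_sub_sinh]
  match_scalars <;> ring

theorem ContinuousLinearMap.exp_neg_I_mul_smul_apply_of_swap (B : E →L[ℂ] E) {u w : E} {a : ℝ}
    (hu : B u = (a : ℂ) • w) (hw : B w = (a : ℂ) • u) (t : ℝ) :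
    NormedSpace.exp ((-Complex.I * t) • B) u
      = (Real.cos (a * t) : ℂ) • u - (Complex.I * Real.sin (a * t)) • w := by
  have hangle : -Complex.I * t * a = (-(a * t) : ℝ) * Complex.I := by push_cast; ring
  rw [((-Complex.I * t) • B).exp_apply_of_swap (a := -Complex.I * t * a)
      (by rw [smul_apply, hu, smul_smul]) (by rw [smul_apply, hw, smul_smul]),
    hangle, Complex.cosh_mul_I, Complex.sinh_mul_I, ← Complex.ofReal_cos, ← Complex.ofReal_sin,
    Real.cos_neg, Real.sin_neg]
  match_scalars <;> ring

end Exponential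

theorem EuclideanSpace.inner_eq_of_apply_eq_ite {ι 𝕜 : Type*} [Fintype ι] [DecidableEq ι]
    [RCLike 𝕜] {s t : Finset ι} {x y : EuclideanSpace 𝕜 ι} {a b : 𝕜}
    (hx : ∀ i, x i = if i ∈ s then a else 0) (hy : ∀ i, y i = if i ∈ t then b else 0) :
    inner 𝕜 x y = (starRingEnd 𝕜) a * b * (s ∩ t).card := by
  simp only [PiLp.inner_apply, RCLike.inner_apply, hx, hy, apply_ite (starRingEnd 𝕜), map_zero,
    ite_mul, zero_mul, mul_ite, mul_zero]
  rw [← Finset.sum_filter, ← Finset.sum_filter, Finset.filter_filter, Finset.sum_const,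
    nsmul_eq_mul, mul_comm b, mul_comm]
  simp only [Finset.filter_and, Finset.subset_univ, Finset.filter_mem_eq_of_subset]

theorem ContinuousLinearMap.sub_one_apply_of_apply_eq_inner_smul_add {E : Type*}
    [NormedAddCommGroup E] [InnerProductSpace ℂ E] (H : E →L[ℂ] E) {u w : E} {a : ℂ}
    (hH : ∀ x, H x = ⟪u, x⟫ • u + ⟪w, x⟫ • w) (hu : ⟪u, u⟫ = 1) (hwu : ⟪w, u⟫ = a) :
    (H - 1) u = a • w := by
  rw [sub_apply, one_apply_eq_self, hH, hu, hwu, one_smul, add_sub_cancel_left]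

section CompleteGraphSearch

variable {V : Type*} [Fintype V] [DecidableEq V] {M : Finset V} {vV vM : EuclideanSpace ℂ V}

theorem inner_self_of_apply_eq_ite {s : Finset V} {x : EuclideanSpace ℂ V}
    (hs : s.Nonempty) (hx : ∀ v, x v = if v ∈ s then ((Real.sqrt s.card : ℂ))⁻¹ else 0) :
    ⟪x, x⟫ = 1 := by
  have hpos : (0 : ℝ) < s.card := by exact_mod_cast hs.card_pos
  have hreal : (Real.sqrt s.card)⁻¹ * (Real.sqrt s.card)⁻¹ * s.card = 1 := by
    rw [← mul_inv, Real.mul_self_sqrt hpos.le, inv_mul_cancel₀ hpos.ne']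
  rw [EuclideanSpace.inner_eq_of_apply_eq_ite hx hx, Finset.inter_self, map_inv₀,
    Complex.conj_ofReal]
  exact_mod_cast hreal

theorem inner_of_apply_eq_ite {s t : Finset V} {x y : EuclideanSpace ℂ V} (hst : s ⊆ t)
    (hx : ∀ v, x v = if v ∈ s then ((Real.sqrt s.card : ℂ))⁻¹ else 0)
    (hy : ∀ v, y v = if v ∈ t then ((Real.sqrt t.card : ℂ))⁻¹ else 0) :
    ⟪x, y⟫ = Real.sqrt (s.card / t.card) ∧ ⟪y, x⟫ = Real.sqrt (s.card / t.card) := by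
  have hreal : (Real.sqrt s.card)⁻¹ * (Real.sqrt t.card)⁻¹ * s.card
      = Real.sqrt (s.card / t.card) := by
    calc _ = s.card / Real.sqrt s.card / Real.sqrt t.card := by ring
      _ = _ := by rw [Real.div_sqrt, Real.sqrt_div' _ (Nat.cast_nonneg _)]
  rw [EuclideanSpace.inner_eq_of_apply_eq_ite hx hy,
    EuclideanSpace.inner_eq_of_apply_eq_ite hy hx, Finset.inter_eq_left.2 hst,
    Finset.inter_eq_right.2 hst]
  simp only [map_inv₀, Complex.conj_ofReal]
  constructor <;> [exact_mod_cast hreal; (rw [← hreal]; push_cast; ring)]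

theorem completeGraphSearch_sub_one_apply (hM : M.Nonempty)
    (hvV : ∀ v, vV v = ((Real.sqrt (Fintype.card V) : ℂ))⁻¹)
    (hvM : ∀ v, vM v = if v ∈ M then ((Real.sqrt M.card : ℂ))⁻¹ else 0)
    {H : EuclideanSpace ℂ V →L[ℂ] EuclideanSpace ℂ V}
    (hH : ∀ x, H x = ⟪vV, x⟫ • vV + ⟪vM, x⟫ • vM) :
    (H - 1) vV = (Real.sqrt (M.card / Fintype.card V) : ℂ) • vM ∧
      (H - 1) vM = (Real.sqrt (M.card / Fintype.card V) : ℂ) • vV := by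
  have hvV' (v : V) :
      vV v = if v ∈ Finset.univ then ((Real.sqrt (Fintype.card V) : ℂ))⁻¹ else 0 := by
    rw [if_pos (Finset.mem_univ v), hvV]
  obtain ⟨hMV, hVM⟩ := inner_of_apply_eq_ite M.subset_univ hvM hvV'
  rw [Finset.card_univ] at hMV hVM
  exact ⟨H.sub_one_apply_of_apply_eq_inner_smul_add hH
      (inner_self_of_apply_eq_ite (hM.mono M.subset_univ) hvV') hMV,
    H.sub_one_apply_of_apply_eq_inner_smul_add (fun x => (hH x).trans (add_comm _ _))
      (inner_self_of_apply_eq_ite hM hvM) hVM⟩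

theorem sum_sq_norm_cos_smul_sub_sin_smul_apply (hM : M.Nonempty)
    (hvV : ∀ v, vV v = ((Real.sqrt (Fintype.card V) : ℂ))⁻¹)
    (hvM : ∀ v, vM v = if v ∈ M then ((Real.sqrt M.card : ℂ))⁻¹ else 0) (θ : ℝ) :
    ∑ v ∈ M, ‖((Real.cos θ : ℂ) • vV - (Complex.I * Real.sin θ) • vM) v‖ ^ 2
      = M.card / Fintype.card V * Real.cos θ ^ 2 + Real.sin θ ^ 2 := by
  have hentry : ∀ v ∈ M, ((Real.cos θ : ℂ) • vV - (Complex.I * Real.sin θ) • vM) v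
      = (Real.cos θ / Real.sqrt (Fintype.card V) : ℝ)
        + (-(Real.sin θ / Real.sqrt M.card) : ℝ) * Complex.I := by
    intro v hv
    simp only [PiLp.sub_apply, PiLp.smul_apply, hvV, hvM, if_pos hv, smul_eq_mul]
    push_cast
    ring
  have hm : (M.card : ℝ) ≠ 0 := by exact_mod_cast hM.card_pos.ne'
  rw [Finset.sum_congr rfl fun v hv => by
      rw [hentry v hv, Complex.sq_norm, Complex.normSq_add_mul_I, neg_sq, div_pow, div_pow,
        Real.sq_sqrt (Nat.cast_nonneg _), Real.sq_sqrt (Nat.cast_nonneg _)],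
    Finset.sum_const, nsmul_eq_mul]
  field_simp

end CompleteGraphSearch

/-- continuous-time quantum walk search on the complete graph:
with `H = |V⟩⟨V| + |M⟩⟨M|`, starting from the uniform state `|V⟩`, and
`α = ⟨M|V⟩ = √(m/n)`, the probability of measuring a marked vertex at time `t` equals
`α² cos²(αt) + sin²(αt)`; at `t = π/(2α)` it equals `1`.  (Global phase ignored via
`H' = H − I`.) -/
theorem stmt_14 {V : Type*} [Fintype V] [DecidableEq V]
    (M : Finset V) (hM : M.Nonempty)
    (vV vM : EuclideanSpace ℂ V)
    (hvV : ∀ v, vV v = ((Real.sqrt (Fintype.card V) : ℂ))⁻¹)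
    (hvM : ∀ v, vM v = if v ∈ M then ((Real.sqrt M.card : ℂ))⁻¹ else 0)
    (H : EuclideanSpace ℂ V →L[ℂ] EuclideanSpace ℂ V)
    (hH : ∀ x, H x = ⟪vV, x⟫ • vV + ⟪vM, x⟫ • vM)
    (α : ℝ) (hα : α = Real.sqrt ((M.card : ℝ) / (Fintype.card V : ℝ))) :
    (∀ t : ℝ,
      ∑ v ∈ M, ‖(NormedSpace.exp ((-Complex.I * (t : ℂ)) • (H - 1))) vV v‖ ^ 2
        = α ^ 2 * Real.cos (α * t) ^ 2 + Real.sin (α * t) ^ 2) ∧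
    ∑ v ∈ M, ‖
        (NormedSpace.exp ((-Complex.I * ((Real.pi / (2 * α) : ℝ) : ℂ)) • (H - 1))) vV v‖ ^ 2
      = 1 := by
  obtain ⟨hHV, hHM⟩ := completeGraphSearch_sub_one_apply hM hvV hvM hH
  rw [← hα] at hHV hHM
  have hprob (t : ℝ) : ∑ v ∈ M, ‖(NormedSpace.exp ((-Complex.I * (t : ℂ)) • (H - 1))) vV v‖ ^ 2
      = α ^ 2 * Real.cos (α * t) ^ 2 + Real.sin (α * t) ^ 2 := by
    rw [(H - 1).exp_neg_I_mul_smul_apply_of_swap hHV hHM,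
      sum_sq_norm_cos_smul_sub_sin_smul_apply hM hvV hvM, hα, Real.sq_sqrt (by positivity)]
  have hαpos : 0 < α := by
    have hV : 0 < Fintype.card V := Fintype.card_pos_iff.2 ⟨hM.choose⟩
    rw [hα]
    exact Real.sqrt_pos.2 (div_pos (by exact_mod_cast hM.card_pos) (by exact_mod_cast hV))
  refine ⟨hprob, ?_⟩
  rw [hprob, show α * (Real.pi / (2 * α)) = Real.pi / 2 by field_simp]
  simp
end

section
/- With notation as above, |Pr(u,v,T) − Pr(u,v,∞)| ≤ 2/(T·δ) for all T > 0, where δ is the minimum gap between any two distinct eigenvalues of A and Pr(u,v,∞) = Σ_λ |⟨v|P_λ|u⟩|². -/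
open scoped ComplexInnerProductSpace
open Complex ComplexConjugate

/-! Since `A = ∑ λᵢ Pᵢ` with complete orthogonal projections `Pᵢ`, the amplitude
`⟪v, e^{-iAt} u⟫` is the trigonometric polynomial `∑ cᵢ e^{-iλᵢt}` with `cᵢ = ⟪v, Pᵢ u⟫`.
Its squared modulus is `∑ᵢⱼ cᵢ c̄ⱼ e^{-i(λᵢ-λⱼ)t}`; averaging over `[0, T]` keeps the diagonal
`∑ |cᵢ|²` exactly, and each off-diagonal average has modulus at most `2 / (T |λᵢ - λⱼ|) ≤ 2 / (Tδ)`.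
The error is therefore at most `2 (∑ |cᵢ|)² / (Tδ)`, and `∑ |cᵢ| ≤ ∑ ‖Pᵢ v‖ ‖Pᵢ u‖ ≤ 1` by
Cauchy–Schwarz. -/

namespace CompleteOrthogonalIdempotents

variable {ι 𝕂 𝔸 : Type*} [Fintype ι] {e : ι → 𝔸}

theorem sum_smul_pow [CommSemiring 𝕂] [Semiring 𝔸] [Algebra 𝕂 𝔸]
    (he : CompleteOrthogonalIdempotents e) (x : ι → 𝕂) (n : ℕ) :
    (∑ i, x i • e i) ^ n = ∑ i, x i ^ n • e i := by
  classical
  induction n with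
  | zero => simp [he.complete]
  | succ n ih =>
    simp only [pow_succ, ih, Finset.sum_mul_sum, smul_mul_smul_comm, he.mul_eq]
    simp [Finset.sum_ite_eq]

theorem exp_sum_smul [RCLike 𝕂] [Ring 𝔸] [Algebra 𝕂 𝔸] [TopologicalSpace 𝔸]
    [IsTopologicalRing 𝔸] [ContinuousSMul 𝕂 𝔸] [T2Space 𝔸]
    (he : CompleteOrthogonalIdempotents e) (x : ι → 𝕂) :
    NormedSpace.exp (∑ i, x i • e i) = ∑ i, NormedSpace.exp (x i) • e i := by
  have hsummable (i : ι) := NormedSpace.expSeries_summable' (𝕂 := 𝕂) (x i)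
  simp only [NormedSpace.exp_eq_tsum 𝕂, he.sum_smul_pow, Finset.smul_sum, ← smul_assoc]
  rw [Summable.tsum_finsetSum fun i _ => (hsummable i).smul_const (e i)]
  exact Finset.sum_congr rfl fun i _ => (hsummable i).tsum_smul_const (e i)

end CompleteOrthogonalIdempotents

section Projections

variable {ι 𝕜 E : Type*} [Fintype ι] [RCLike 𝕜] [NormedAddCommGroup E] [InnerProductSpace 𝕜 E]
  {P : ι → E →L[𝕜] E}

theorem CompleteOrthogonalIdempotents.sum_norm_sq_apply (hP : CompleteOrthogonalIdempotents P)
    (hsym : ∀ i, (P i : E →ₗ[𝕜] E).IsSymmetric) (u : E) :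
    ∑ i, ‖P i u‖ ^ 2 = ‖u‖ ^ 2 := by
  have hinner (i : ι) : ‖P i u‖ ^ 2 = RCLike.re (inner 𝕜 u (P i u)) := by
    have hPu : inner 𝕜 (P i u) (P i u) = inner 𝕜 u (P i (P i u)) := hsym i u (P i u)
    rw [← mul_apply_eq_comp, (hP.idem i).eq] at hPu
    rw [← hPu, inner_self_eq_norm_sq]
  have hu : ∑ i, P i u = u := by
    rw [← sum_apply, hP.complete, one_apply_eq_self]
  simp only [hinner, ← map_sum, ← inner_sum, hu, inner_self_eq_norm_sq]

theorem CompleteOrthogonalIdempotents.sum_norm_inner_apply_le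
    (hP : CompleteOrthogonalIdempotents P)
    (hsym : ∀ i, (P i : E →ₗ[𝕜] E).IsSymmetric) (u v : E) :
    ∑ i, ‖inner 𝕜 v (P i u)‖ ≤ ‖v‖ * ‖u‖ := by
  have hproj (i : ι) : inner 𝕜 v (P i u) = inner 𝕜 (P i v) (P i u) := by
    have hPv : inner 𝕜 (P i v) (P i u) = inner 𝕜 v (P i (P i u)) := hsym i v (P i u)
    rw [hPv, ← mul_apply_eq_comp, (hP.idem i).eq]
  calc ∑ i, ‖inner 𝕜 v (P i u)‖ ≤ ∑ i, ‖P i v‖ * ‖P i u‖ :=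
        Finset.sum_le_sum fun i _ => hproj i ▸ norm_inner_le_norm _ _
    _ ≤ √(∑ i, ‖P i v‖ ^ 2) * √(∑ i, ‖P i u‖ ^ 2) := Real.sum_mul_le_sqrt_mul_sqrt _ _ _
    _ = ‖v‖ * ‖u‖ := by
        rw [hP.sum_norm_sq_apply hsym, hP.sum_norm_sq_apply hsym, Real.sqrt_sq (norm_nonneg _),
          Real.sqrt_sq (norm_nonneg _)]

end Projections

theorem norm_integral_exp_neg_I_mul_le {ω : ℝ} (hω : ω ≠ 0) (T : ℝ) :
    ‖∫ t in (0 : ℝ)..T, cexp (-I * ω * t)‖ ≤ 2 / |ω| := by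
  have hc : -I * ω ≠ 0 := mul_ne_zero (neg_ne_zero.mpr I_ne_zero) (ofReal_ne_zero.mpr hω)
  have hunit : ‖cexp (-I * ω * T)‖ = 1 := by
    rw [show -I * ω * T = ((-(ω * T) : ℝ) : ℂ) * I by push_cast; ring, norm_exp_ofReal_mul_I]
  rw [integral_exp_mul_complex hc, norm_div, ofReal_zero, mul_zero, exp_zero]
  have hnorm : ‖-I * (ω : ℂ)‖ = |ω| := by simp
  rw [hnorm]
  gcongr
  calc ‖cexp (-I * ω * T) - 1‖ ≤ ‖cexp (-I * ω * T)‖ + ‖(1 : ℂ)‖ := norm_sub_le _ _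
    _ = 2 := by rw [hunit, norm_one]; norm_num

theorem sq_norm_sum_mul_exp {ι : Type*} [Fintype ι] (c : ι → ℂ) (l : ι → ℝ) (t : ℝ) :
    ((‖∑ i, cexp (-I * l i * t) * c i‖ ^ 2 : ℝ) : ℂ)
      = ∑ i, ∑ j, c i * conj (c j) * cexp (-I * (l i - l j : ℝ) * t) := by
  have hphase (i j : ι) : cexp (-I * l i * t) * conj (cexp (-I * l j * t))
      = cexp (-I * (l i - l j : ℝ) * t) := by
    rw [← exp_conj, ← exp_add]
    congr 1
    simp only [map_mul, map_neg, conj_I, conj_ofReal]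
    push_cast
    ring
  rw [ofReal_pow, ← mul_conj', map_sum, Finset.sum_mul_sum]
  refine Finset.sum_congr rfl fun i _ => Finset.sum_congr rfl fun j _ => ?_
  rw [map_mul, ← hphase]
  ring

theorem abs_average_sq_norm_sum_mul_exp_sub_le {ι : Type*} [Fintype ι] (c : ι → ℂ) (l : ι → ℝ)
    {δ T : ℝ} (hδ : 0 < δ) (hgap : ∀ i j, i ≠ j → δ ≤ |l i - l j|) (hT : 0 < T) :
    |(1 / T) * (∫ t in (0 : ℝ)..T, ‖∑ i, cexp (-I * l i * t) * c i‖ ^ 2) - ∑ i, ‖c i‖ ^ 2|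
      ≤ 2 * (∑ i, ‖c i‖) ^ 2 / (T * δ) := by
  classical
  set J : ι → ι → ℂ := fun i j => ∫ t in (0 : ℝ)..T, cexp (-I * (l i - l j : ℝ) * t)
  have hJ (i j : ι) : ‖J i j - if i = j then (T : ℂ) else 0‖ ≤ 2 / δ := by
    by_cases hij : i = j
    · subst hij
      simp only [J, sub_self, if_true, ofReal_zero, mul_zero, zero_mul, exp_zero,
        intervalIntegral.integral_const, sub_zero, real_smul, mul_one, norm_zero]
      positivity
    · have hω : l i - l j ≠ 0 := fun h => (hδ.trans_le (hgap i j hij)).ne' (by simp [h])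
      rw [if_neg hij, sub_zero]
      exact (norm_integral_exp_neg_I_mul_le hω T).trans
        (div_le_div_of_nonneg_left zero_le_two hδ (hgap i j hij))
  have hintegral : (∫ t in (0 : ℝ)..T, ((‖∑ i, cexp (-I * l i * t) * c i‖ ^ 2 : ℝ) : ℂ))
      = ∑ i, ∑ j, c i * conj (c j) * J i j := by
    simp_rw [sq_norm_sum_mul_exp]
    rw [intervalIntegral.integral_finsetSum fun i _ => ?_]
    · refine Finset.sum_congr rfl fun i _ => ?_
      rw [intervalIntegral.integral_finsetSum fun j _ => ?_]
      · exact Finset.sum_congr rfl fun j _ => intervalIntegral.integral_const_mul _ _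
      · exact (by fun_prop : Continuous _).intervalIntegrable _ _
    · exact (by fun_prop : Continuous _).intervalIntegrable _ _
  have hdiag : ∑ i, ((‖c i‖ ^ 2 : ℝ) : ℂ)
      = (1 / T) * ∑ i, ∑ j, c i * conj (c j) * (if i = j then (T : ℂ) else 0) := by
    simp only [mul_ite, mul_zero, Finset.sum_ite_eq, Finset.mem_univ, if_true, Finset.mul_sum,
      ofReal_pow, ← mul_conj']
    have hT0 : (T : ℂ) ≠ 0 := ofReal_ne_zero.mpr hT.ne'
    exact Finset.sum_congr rfl fun i _ => by field_simp
  have hdiff : (((1 / T) * (∫ t in (0 : ℝ)..T, ‖∑ i, cexp (-I * l i * t) * c i‖ ^ 2)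
      - ∑ i, ‖c i‖ ^ 2 : ℝ) : ℂ)
      = (1 / T) * ∑ i, ∑ j, c i * conj (c j) * (J i j - if i = j then (T : ℂ) else 0) := by
    rw [ofReal_sub, ofReal_mul, ← intervalIntegral.integral_ofReal, hintegral, ofReal_sum, hdiag]
    simp only [mul_sub, Finset.sum_sub_distrib]
    push_cast
    ring
  have hnormT : ‖(1 / T : ℂ)‖ = 1 / T := by
    rw [norm_div, norm_one, norm_real, Real.norm_of_nonneg hT.le]
  rw [← Real.norm_eq_abs, ← norm_real, hdiff]
  calc _ ≤ ‖(1 / T : ℂ)‖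
        * ∑ i, ∑ j, ‖c i * conj (c j) * (J i j - if i = j then (T : ℂ) else 0)‖ := by
        rw [norm_mul]
        gcongr
        exact (norm_sum_le _ _).trans (Finset.sum_le_sum fun i _ => norm_sum_le _ _)
    _ ≤ (1 / T) * ∑ i, ∑ j, ‖c i‖ * ‖c j‖ * (2 / δ) := by
        rw [hnormT]
        gcongr with i _ j _
        rw [norm_mul, norm_mul, norm_conj]
        gcongr
        exact hJ i j
    _ = 2 * (∑ i, ‖c i‖) ^ 2 / (T * δ) := by
        rw [sq, Finset.sum_mul_sum]
        simp only [← Finset.sum_mul]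
        field_simp

theorem stmt_16_general {E : Type*} [NormedAddCommGroup E] [InnerProductSpace ℂ E]
    (k : ℕ) (l : Fin k → ℝ) (hl : Function.Injective l)
    (P : Fin k → E →L[ℂ] E)
    (hsa : ∀ i (x y : E), ⟪P i x, y⟫ = ⟪x, P i y⟫)
    (horth : ∀ i j, i ≠ j → P i ∘L P j = 0)
    (hsum : ∑ i, P i = 1)
    (A : E →L[ℂ] E) (hA : A = ∑ i, (l i : ℂ) • P i)
    (u v : E) (hu : ‖u‖ = 1) (hv : ‖v‖ = 1)
    (δ : ℝ) (hδ : IsLeast {d : ℝ | ∃ i j : Fin k, i ≠ j ∧ d = |l i - l j|} δ) :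
    ∀ T : ℝ, 0 < T →
      |(1 / T) * (∫ t in (0 : ℝ)..T,
            ‖⟪v, (NormedSpace.exp ((-Complex.I * (t : ℂ)) • A)) u⟫‖ ^ 2)
          - ∑ i, ‖⟪v, P i u⟫‖ ^ 2| ≤ 2 / (T * δ) := by
  intro T hT
  obtain ⟨⟨i₀, j₀, hij₀, hδ_eq⟩, hgap⟩ := hδ
  have hδ_pos : 0 < δ := hδ_eq ▸ abs_pos.mpr (sub_ne_zero.mpr (hl.ne hij₀))
  have hP : CompleteOrthogonalIdempotents P :=
    CompleteOrthogonalIdempotents.iff_ortho_complete.mpr ⟨fun i j hij => horth i j hij, hsum⟩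
  have hexpand (t : ℝ) : ⟪v, NormedSpace.exp ((-I * t) • A) u⟫
      = ∑ i, cexp (-I * l i * t) * ⟪v, P i u⟫ := by
    rw [hA, Finset.smul_sum]
    simp_rw [smul_smul]
    rw [hP.exp_sum_smul, ← exp_eq_exp_ℂ]
    simp only [FunLike.coe_sum, Finset.sum_apply, inner_sum, FunLike.coe_smul, Pi.smul_apply,
      inner_smul_right, mul_right_comm _ (t : ℂ)]
  have hsum_le : ∑ i, ‖⟪v, P i u⟫‖ ≤ 1 := by
    simpa [hu, hv] using hP.sum_norm_inner_apply_le hsa u v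
  have hsq_le : (∑ i, ‖⟪v, P i u⟫‖) ^ 2 ≤ 1 :=
    pow_le_one₀ (Finset.sum_nonneg fun i _ => norm_nonneg _) hsum_le
  simp_rw [hexpand]
  calc _ ≤ 2 * (∑ i, ‖⟪v, P i u⟫‖) ^ 2 / (T * δ) :=
        abs_average_sq_norm_sum_mul_exp_sub_le _ l hδ_pos (fun i j hij => hgap ⟨i, j, hij, rfl⟩) hT
    _ ≤ 2 / (T * δ) := by
        gcongr
        linarith

/-- with `A = Σ_i λ_i P_i` Hermitian with at least two distinct
eigenvalues, `δ` the minimum gap between distinct eigenvalues, and unit vectors `u, v`,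
`|Pr(u,v,T) − Pr(u,v,∞)| ≤ 2/(Tδ)` for all `T > 0`, where
`Pr(u,v,T) = (1/T)∫₀^T |⟨v|e^{−iAt}|u⟩|² dt` and `Pr(u,v,∞) = Σ_i |⟨v|P_i|u⟩|²`. -/
theorem stmt_16 {E : Type*} [NormedAddCommGroup E] [InnerProductSpace ℂ E]
    [FiniteDimensional ℂ E]
    (k : ℕ) (hk : 2 ≤ k) (l : Fin k → ℝ) (hl : Function.Injective l)
    (P : Fin k → E →L[ℂ] E)
    (hsa : ∀ i (x y : E), ⟪P i x, y⟫ = ⟪x, P i y⟫)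
    (hidem : ∀ i, P i ∘L P i = P i)
    (horth : ∀ i j, i ≠ j → P i ∘L P j = 0)
    (hsum : ∑ i, P i = 1)
    (A : E →L[ℂ] E) (hA : A = ∑ i, (l i : ℂ) • P i)
    (u v : E) (hu : ‖u‖ = 1) (hv : ‖v‖ = 1)
    (δ : ℝ) (hδ : IsLeast {d : ℝ | ∃ i j : Fin k, i ≠ j ∧ d = |l i - l j|} δ) :
    ∀ T : ℝ, 0 < T →
      |(1 / T) * (∫ t in (0 : ℝ)..T,
            ‖⟪v, (NormedSpace.exp ((-Complex.I * (t : ℂ)) • A)) u⟫‖ ^ 2)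
          - ∑ i, ‖⟪v, P i u⟫‖ ^ 2| ≤ 2 / (T * δ) :=
  stmt_16_general k l hl P hsa horth hsum A hA u v hu hv δ hδ
end
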